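/- arXiv:2404.01829 — 3 statements merged into one kernel-verified Lean document; each statement's English description precedes it below -/
import Mathlib

section
/- Consider the decomposed system with state x = (x₁, x₂, x_c) ∈ ℝ^{n₁} × ℝ^{n₂} × ℝ^{n_c}, controls u = (u₁, u₂) with u_i valued in a nonempty set U_i ⊆ ℝ^{m_i}, and dynamics ẋ₁ = f₁(x₁, x_c) + g₁(x₁, x_c) u₁, ẋ₂ = f₂(x₂, x_c) + g₂(x₂, x_c) u₂, ẋ_c = f_c(x_c). Suppose f_c is Lipschitz and that for every t ≤ 0 and every initial subsystem state each subsystem admits at least one admissible pair. Then for every t ≤ 0 and every state x = (x₁, x₂, x_c), the full time-varying control Lyapunov value function equals the reconstruction from the subsystems: V(x, t) = max(V₁((x₁, x_c), t), V₂((x₂, x_c), t)). Consequently, if as t → −∞ the values V(x, t), V₁((x₁, x_c), t), V₂((x₂, x_c), t) converge to limits V^∞(x), V₁^∞(x₁, x_c), V₂^∞(x₂, x_c), then V^∞(x) = max(V₁^∞(x₁, x_c), V₂^∞(x₂, x_c)). -/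
open MeasureTheory Set Filter
open scoped ENNReal Topology

set_option maxHeartbeats 2000000

noncomputable section

abbrev Euc (n : ℕ) : Type := EuclideanSpace ℝ (Fin n)

/-- An admissible pair for the control system `ξ' = R (ξ, u)` with control set `U` on the
interval `[t, 0]`: a measurable control taking values in `U` together with a continuous
trajectory satisfying the integral form of the dynamics, with integrable integrand. -/
def IsAdmissiblePair {E F : Type*} [NormedAddCommGroup E] [NormedSpace ℝ E]
    [CompleteSpace E] [MeasurableSpace F]
    (R : E → F → E) (U : Set F) (t : ℝ) (u : ℝ → F) (ξ : ℝ → E) : Prop :=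
  Measurable u ∧ (∀ s, u s ∈ U) ∧ Continuous ξ ∧
    ∀ s ∈ Icc t (0 : ℝ),
      IntervalIntegrable (fun τ => R (ξ τ) (u τ)) volume t s ∧
      ξ s = ξ t + ∫ τ in t..s, R (ξ τ) (u τ)

/-- The exponentially amplified running cost of a trajectory on `[t, 0]`. -/
def trajCost {E : Type*} (γ t : ℝ) (ℓ : E → ℝ) (ξ : ℝ → E) : ℝ≥0∞ :=
  ⨆ s ∈ Icc t (0 : ℝ), ENNReal.ofReal (Real.exp (γ * (s - t)) * ℓ (ξ s))

/-- The time-varying control Lyapunov value function (horizon `T = 0`): infimum, over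
admissible pairs starting at `z` at time `t`, of the exponentially amplified running
maximum of the loss. -/
def tvCLVF {E F : Type*} [NormedAddCommGroup E] [NormedSpace ℝ E]
    [CompleteSpace E] [MeasurableSpace F]
    (R : E → F → E) (U : Set F) (γ : ℝ) (ℓ : E → ℝ) (z : E) (t : ℝ) : ℝ≥0∞ :=
  ⨅ p : {p : (ℝ → F) × (ℝ → E) // IsAdmissiblePair R U t p.1 p.2 ∧ p.2 t = z},
    trajCost γ t ℓ (p : (ℝ → F) × (ℝ → E)).2

-- helpers below

lemma IntervalIntegrable.prodMk' {E E' : Type*} [NormedAddCommGroup E] [NormedAddCommGroup E']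
    {f : ℝ → E} {g : ℝ → E'} {a b : ℝ}
    (hf : IntervalIntegrable f volume a b) (hg : IntervalIntegrable g volume a b) :
    IntervalIntegrable (fun τ => (f τ, g τ)) volume a b :=
  ⟨hf.1.prodMk hg.1, hf.2.prodMk hg.2⟩

lemma IntervalIntegrable.clm_comp' {E E' : Type*} [NormedAddCommGroup E] [NormedSpace ℝ E]
    [NormedAddCommGroup E'] [NormedSpace ℝ E'] {f : ℝ → E} {a b : ℝ}
    (L : E →L[ℝ] E') (hf : IntervalIntegrable f volume a b) :
    IntervalIntegrable (fun τ => L (f τ)) volume a b :=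
  ⟨L.integrable_comp hf.1, L.integrable_comp hf.2⟩

lemma IsAdmissiblePair.projCLM {E E' F F' : Type*}
    [NormedAddCommGroup E] [NormedSpace ℝ E] [CompleteSpace E]
    [NormedAddCommGroup E'] [NormedSpace ℝ E'] [CompleteSpace E']
    [MeasurableSpace F] [MeasurableSpace F']
    {R : E → F → E} {R' : E' → F' → E'} {U : Set F} {U' : Set F'}
    (L : E →L[ℝ] E') {P : F → F'} (hPm : Measurable P) (hPU : ∀ v ∈ U, P v ∈ U')
    (hcomm : ∀ x v, v ∈ U → L (R x v) = R' (L x) (P v))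
    {t : ℝ} {u : ℝ → F} {ξ : ℝ → E} (h : IsAdmissiblePair R U t u ξ) :
    IsAdmissiblePair R' U' t (fun s => P (u s)) (fun s => L (ξ s)) := by
  obtain ⟨hm, hU, hc, hint⟩ := h
  have key : (fun τ => R' (L (ξ τ)) (P (u τ))) = fun τ => L (R (ξ τ) (u τ)) :=
    funext fun τ => (hcomm _ _ (hU τ)).symm
  refine ⟨hPm.comp hm, fun s => hPU _ (hU s), L.continuous.comp hc, fun s hs => ?_⟩
  obtain ⟨hi, he⟩ := hint s hs
  rw [key]
  refine ⟨hi.clm_comp' L, ?_⟩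
  rw [L.intervalIntegral_comp_comm hi, ← L.map_add, ← he]

lemma eqOn_of_integralEq {E : Type*} [NormedAddCommGroup E] [NormedSpace ℝ E]
    [CompleteSpace E] {fc : E → E} {K : NNReal} (hK : LipschitzWith K fc) {t : ℝ} (ht : t ≤ 0)
    {ζ₁ ζ₂ : ℝ → E} (hc₁ : Continuous ζ₁) (hc₂ : Continuous ζ₂)
    (he₁ : ∀ s ∈ Icc t (0:ℝ), ζ₁ s = ζ₁ t + ∫ τ in t..s, fc (ζ₁ τ))
    (he₂ : ∀ s ∈ Icc t (0:ℝ), ζ₂ s = ζ₂ t + ∫ τ in t..s, fc (ζ₂ τ))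
    (h0 : ζ₁ t = ζ₂ t) : EqOn ζ₁ ζ₂ (Icc t 0) := by
  have key : ∀ ζ : ℝ → E, Continuous ζ →
      (∀ s ∈ Icc t (0:ℝ), ζ s = ζ t + ∫ τ in t..s, fc (ζ τ)) →
      ∀ s ∈ Ico t (0:ℝ), HasDerivWithinAt ζ (fc (ζ s)) (Ici s) s := by
    intro ζ hc he s hs
    have hcont : Continuous fun τ => fc (ζ τ) := hK.continuous.comp hc
    have hF : HasDerivAt (fun r => ζ t + ∫ τ in t..r, fc (ζ τ)) (fc (ζ s)) s :=
      (intervalIntegral.integral_hasDerivAt_right (hcont.intervalIntegrable t s)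
        hcont.stronglyMeasurable.stronglyMeasurableAtFilter hcont.continuousAt).const_add _
    refine (hF.hasDerivWithinAt).congr_of_eventuallyEq ?_ (he s (Ico_subset_Icc_self hs))
    filter_upwards [self_mem_nhdsWithin, mem_nhdsWithin_of_mem_nhds (Iio_mem_nhds hs.2)]
      with τ h1 h2
    exact he τ ⟨le_trans hs.1 h1, le_of_lt h2⟩
  exact ODE_solution_unique (v := fun _ z => fc z) (fun _ => hK) hc₁.continuousOn
    (key ζ₁ hc₁ he₁) hc₂.continuousOn (key ζ₂ hc₂ he₂) h0

lemma biSup_sup' {α : Type*} (S : Set α) (A B : α → ℝ≥0∞) :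
    (⨆ s ∈ S, (A s ⊔ B s)) = (⨆ s ∈ S, A s) ⊔ ⨆ s ∈ S, B s := by
  simp only [iSup_sup_eq]

lemma ofReal_mul_max (e a b : ℝ) (he : 0 ≤ e) :
    ENNReal.ofReal (e * max a b) = ENNReal.ofReal (e * a) ⊔ ENNReal.ofReal (e * b) := by
  rw [mul_max_of_nonneg _ _ he]
  exact Monotone.map_max fun _ _ h => ENNReal.ofReal_le_ofReal h

section Aux

variable {n₁ n₂ nc m₁ m₂ : ℕ}

/-- Subsystem right-hand side. -/
def sysR {n nc m : ℕ} (f : Euc n × Euc nc → Euc n)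
    (g : Euc n × Euc nc → (Euc m →L[ℝ] Euc n)) (fc : Euc nc → Euc nc) :
    (Euc n × Euc nc) → Euc m → (Euc n × Euc nc) :=
  fun z v => (f z + g z v, fc z.2)

/-- Full right-hand side. -/
def fullR (f₁ : Euc n₁ × Euc nc → Euc n₁) (g₁ : Euc n₁ × Euc nc → (Euc m₁ →L[ℝ] Euc n₁))
    (f₂ : Euc n₂ × Euc nc → Euc n₂) (g₂ : Euc n₂ × Euc nc → (Euc m₂ →L[ℝ] Euc n₂))
    (fc : Euc nc → Euc nc) :
    (Euc n₁ × Euc n₂ × Euc nc) → (Euc m₁ × Euc m₂) → (Euc n₁ × Euc n₂ × Euc nc) :=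
  fun x v => (f₁ (x.1, x.2.2) + g₁ (x.1, x.2.2) v.1,
    f₂ (x.2.1, x.2.2) + g₂ (x.2.1, x.2.2) v.2, fc x.2.2)

lemma recon_main (f₁ : Euc n₁ × Euc nc → Euc n₁) (g₁ : Euc n₁ × Euc nc → (Euc m₁ →L[ℝ] Euc n₁))
    (f₂ : Euc n₂ × Euc nc → Euc n₂) (g₂ : Euc n₂ × Euc nc → (Euc m₂ →L[ℝ] Euc n₂))
    (fc : Euc nc → Euc nc) (hfc : ∃ K, LipschitzWith K fc)
    (U₁ : Set (Euc m₁)) (U₂ : Set (Euc m₂)) (γ : ℝ)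
    (ℓ₁ : Euc n₁ × Euc nc → ℝ) (ℓ₂ : Euc n₂ × Euc nc → ℝ)
    (t : ℝ) (ht : t ≤ 0) (x : Euc n₁ × Euc n₂ × Euc nc) :
    tvCLVF (fullR f₁ g₁ f₂ g₂ fc) (U₁ ×ˢ U₂) γ
        (fun x => max (ℓ₁ (x.1, x.2.2)) (ℓ₂ (x.2.1, x.2.2))) x t =
      max (tvCLVF (sysR f₁ g₁ fc) U₁ γ ℓ₁ (x.1, x.2.2) t)
        (tvCLVF (sysR f₂ g₂ fc) U₂ γ ℓ₂ (x.2.1, x.2.2) t) := by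
  obtain ⟨K, hK⟩ := hfc
  set ℓ : Euc n₁ × Euc n₂ × Euc nc → ℝ :=
    fun x => max (ℓ₁ (x.1, x.2.2)) (ℓ₂ (x.2.1, x.2.2)) with hℓdef
  refine le_antisymm ?_ ?_
  · -- V ≤ max V₁ V₂
    have key : ∀ (u₁ : ℝ → Euc m₁) (ξ₁ : ℝ → Euc n₁ × Euc nc),
        IsAdmissiblePair (sysR f₁ g₁ fc) U₁ t u₁ ξ₁ → ξ₁ t = (x.1, x.2.2) →
        ∀ (u₂ : ℝ → Euc m₂) (ξ₂ : ℝ → Euc n₂ × Euc nc),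
        IsAdmissiblePair (sysR f₂ g₂ fc) U₂ t u₂ ξ₂ → ξ₂ t = (x.2.1, x.2.2) →
        tvCLVF (fullR f₁ g₁ f₂ g₂ fc) (U₁ ×ˢ U₂) γ ℓ x t ≤
          trajCost γ t ℓ₁ ξ₁ ⊔ trajCost γ t ℓ₂ ξ₂ := by
      intro u₁ ξ₁ h₁ hs₁ u₂ ξ₂ h₂ hs₂
      -- the common component satisfies the autonomous ODE on both sides
      have hc1 : IsAdmissiblePair (fun (z : Euc nc) (_ : Euc m₁) => fc z) U₁ t
          (fun s => id (u₁ s)) (fun s => (ContinuousLinearMap.snd ℝ (Euc n₁) (Euc nc)) (ξ₁ s)) :=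
        h₁.projCLM _ measurable_id (fun v hv => hv) (fun z v _ => rfl)
      have hc2 : IsAdmissiblePair (fun (z : Euc nc) (_ : Euc m₂) => fc z) U₂ t
          (fun s => id (u₂ s)) (fun s => (ContinuousLinearMap.snd ℝ (Euc n₂) (Euc nc)) (ξ₂ s)) :=
        h₂.projCLM _ measurable_id (fun v hv => hv) (fun z v _ => rfl)
      have he₁ : ∀ s ∈ Icc t (0:ℝ),
          (ξ₁ s).2 = (ξ₁ t).2 + ∫ τ in t..s, fc ((ξ₁ τ).2) :=
        fun s hs => (hc1.2.2.2 s hs).2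
      have he₂ : ∀ s ∈ Icc t (0:ℝ),
          (ξ₂ s).2 = (ξ₂ t).2 + ∫ τ in t..s, fc ((ξ₂ τ).2) :=
        fun s hs => (hc2.2.2.2 s hs).2
      have hcξ₁ : Continuous ξ₁ := h₁.2.2.1
      have hcξ₂ : Continuous ξ₂ := h₂.2.2.1
      have ceq : EqOn (fun s => (ξ₁ s).2) (fun s => (ξ₂ s).2) (Icc t 0) :=
        eqOn_of_integralEq hK ht (continuous_snd.comp hcξ₁) (continuous_snd.comp hcξ₂)
          he₁ he₂ (by rw [hs₁, hs₂])
      -- combined trajectory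
      set ξ : ℝ → Euc n₁ × Euc n₂ × Euc nc := fun s => ((ξ₁ s).1, (ξ₂ s).1, (ξ₁ s).2)
        with hξdef
      set u : ℝ → Euc m₁ × Euc m₂ := fun s => (u₁ s, u₂ s) with hudef
      set M : ((Euc n₁ × Euc nc) × (Euc n₂ × Euc nc)) →L[ℝ] (Euc n₁ × Euc n₂ × Euc nc) :=
        ((ContinuousLinearMap.fst ℝ (Euc n₁) (Euc nc)).comp
            (ContinuousLinearMap.fst ℝ (Euc n₁ × Euc nc) (Euc n₂ × Euc nc))).prod
          ((((ContinuousLinearMap.fst ℝ (Euc n₂) (Euc nc)).comp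
            (ContinuousLinearMap.snd ℝ (Euc n₁ × Euc nc) (Euc n₂ × Euc nc)))).prod
          ((ContinuousLinearMap.snd ℝ (Euc n₁) (Euc nc)).comp
            (ContinuousLinearMap.fst ℝ (Euc n₁ × Euc nc) (Euc n₂ × Euc nc)))) with hMdef
      have hadm : IsAdmissiblePair (fullR f₁ g₁ f₂ g₂ fc) (U₁ ×ˢ U₂) t u ξ := by
        refine ⟨h₁.1.prodMk h₂.1, fun s => ⟨h₁.2.1 s, h₂.2.1 s⟩,
          (continuous_fst.comp hcξ₁).prodMk
            ((continuous_fst.comp hcξ₂).prodMk (continuous_snd.comp hcξ₁)), ?_⟩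
        intro s hs
        have hts : t ≤ s := hs.1
        have hsub : Icc t s ⊆ Icc t 0 := Icc_subset_Icc_right hs.2
        obtain ⟨hi₁, heq₁⟩ := h₁.2.2.2 s hs
        obtain ⟨hi₂, heq₂⟩ := h₂.2.2.2 s hs
        have hH : IntervalIntegrable
            (fun τ => (sysR f₁ g₁ fc (ξ₁ τ) (u₁ τ), sysR f₂ g₂ fc (ξ₂ τ) (u₂ τ)))
            volume t s := hi₁.prodMk' hi₂
        have hGeq : EqOn (fun τ => fullR f₁ g₁ f₂ g₂ fc (ξ τ) (u τ))
            (fun τ => M (sysR f₁ g₁ fc (ξ₁ τ) (u₁ τ), sysR f₂ g₂ fc (ξ₂ τ) (u₂ τ)))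
            (Icc t s) := by
          intro τ hτ
          have hc : (ξ₁ τ).2 = (ξ₂ τ).2 := ceq (hsub hτ)
          refine Prod.ext rfl (Prod.ext ?_ rfl)
          show f₂ ((ξ₂ τ).1, (ξ₁ τ).2) + g₂ ((ξ₂ τ).1, (ξ₁ τ).2) (u₂ τ)
              = f₂ (ξ₂ τ) + g₂ (ξ₂ τ) (u₂ τ)
          rw [hc]
        refine ⟨?_, ?_⟩
        · refine (intervalIntegrable_iff_integrableOn_Icc_of_le hts).2 ?_
          exact ((intervalIntegrable_iff_integrableOn_Icc_of_le hts).1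
            (hH.clm_comp' M)).congr_fun hGeq.symm measurableSet_Icc
        · have hint : ∫ τ in t..s, fullR f₁ g₁ f₂ g₂ fc (ξ τ) (u τ)
              = M (∫ τ in t..s, (sysR f₁ g₁ fc (ξ₁ τ) (u₁ τ), sysR f₂ g₂ fc (ξ₂ τ) (u₂ τ))) := by
            rw [intervalIntegral.integral_congr
              (by rwa [uIcc_of_le hts] : EqOn _ _ (uIcc t s)),
              M.intervalIntegral_comp_comm hH]
          rw [hint]
          have hI1 : ((∫ τ in t..s,
                (sysR f₁ g₁ fc (ξ₁ τ) (u₁ τ), sysR f₂ g₂ fc (ξ₂ τ) (u₂ τ)))).1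
              = ∫ τ in t..s, sysR f₁ g₁ fc (ξ₁ τ) (u₁ τ) :=
            ((ContinuousLinearMap.fst ℝ _ _).intervalIntegral_comp_comm hH).symm
          have hI2 : ((∫ τ in t..s,
                (sysR f₁ g₁ fc (ξ₁ τ) (u₁ τ), sysR f₂ g₂ fc (ξ₂ τ) (u₂ τ)))).2
              = ∫ τ in t..s, sysR f₂ g₂ fc (ξ₂ τ) (u₂ τ) :=
            ((ContinuousLinearMap.snd ℝ _ _).intervalIntegral_comp_comm hH).symm
          have hpair : ((ξ₁ s, ξ₂ s) : (Euc n₁ × Euc nc) × (Euc n₂ × Euc nc))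
              = (ξ₁ t, ξ₂ t) + ∫ τ in t..s,
                (sysR f₁ g₁ fc (ξ₁ τ) (u₁ τ), sysR f₂ g₂ fc (ξ₂ τ) (u₂ τ)) := by
            refine Prod.ext ?_ ?_
            · rw [Prod.fst_add]
              show ξ₁ s = ξ₁ t + _
              rw [hI1]; exact heq₁
            · rw [Prod.snd_add]
              show ξ₂ s = ξ₂ t + _
              rw [hI2]; exact heq₂
          calc ξ s = M (ξ₁ s, ξ₂ s) := rfl
            _ = M ((ξ₁ t, ξ₂ t) + ∫ τ in t..s,
                (sysR f₁ g₁ fc (ξ₁ τ) (u₁ τ), sysR f₂ g₂ fc (ξ₂ τ) (u₂ τ))) := by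
                rw [← hpair]
            _ = M (ξ₁ t, ξ₂ t) + M (∫ τ in t..s,
                (sysR f₁ g₁ fc (ξ₁ τ) (u₁ τ), sysR f₂ g₂ fc (ξ₂ τ) (u₂ τ))) := M.map_add _ _
            _ = ξ t + _ := rfl
      have hstart : ξ t = x := by
        show ((ξ₁ t).1, (ξ₂ t).1, (ξ₁ t).2) = x
        rw [hs₁, hs₂]
      have hcost : trajCost γ t ℓ ξ = trajCost γ t ℓ₁ ξ₁ ⊔ trajCost γ t ℓ₂ ξ₂ := by
        have hterm : ∀ s ∈ Icc t (0:ℝ),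
            ENNReal.ofReal (Real.exp (γ * (s - t)) * ℓ (ξ s))
              = ENNReal.ofReal (Real.exp (γ * (s - t)) * ℓ₁ (ξ₁ s))
                ⊔ ENNReal.ofReal (Real.exp (γ * (s - t)) * ℓ₂ (ξ₂ s)) := by
          intro s hs
          have h2 : (((ξ s).2.1, (ξ s).2.2) : Euc n₂ × Euc nc) = ξ₂ s :=
            Prod.ext rfl (ceq hs)
          have h1 : (((ξ s).1, (ξ s).2.2) : Euc n₁ × Euc nc) = ξ₁ s := rfl
          show ENNReal.ofReal (Real.exp (γ * (s - t)) *
            max (ℓ₁ ((ξ s).1, (ξ s).2.2)) (ℓ₂ ((ξ s).2.1, (ξ s).2.2))) = _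
          rw [h1, h2, ofReal_mul_max _ _ _ (Real.exp_nonneg _)]
        unfold trajCost
        rw [iSup_congr fun s => iSup_congr fun hs => hterm s hs]
        exact biSup_sup' _ _ _
      calc tvCLVF (fullR f₁ g₁ f₂ g₂ fc) (U₁ ×ˢ U₂) γ ℓ x t ≤ trajCost γ t ℓ ξ :=
            iInf_le (fun p : {p : (ℝ → Euc m₁ × Euc m₂) × (ℝ → Euc n₁ × Euc n₂ × Euc nc) //
                IsAdmissiblePair (fullR f₁ g₁ f₂ g₂ fc) (U₁ ×ˢ U₂) t p.1 p.2 ∧ p.2 t = x} =>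
              trajCost γ t ℓ (p : (ℝ → Euc m₁ × Euc m₂) × (ℝ → Euc n₁ × Euc n₂ × Euc nc)).2)
              ⟨(u, ξ), hadm, hstart⟩
        _ = _ := hcost
    calc tvCLVF (fullR f₁ g₁ f₂ g₂ fc) (U₁ ×ˢ U₂) γ ℓ x t
        ≤ ⨅ p₁ : {p : (ℝ → Euc m₁) × (ℝ → Euc n₁ × Euc nc) //
              IsAdmissiblePair (sysR f₁ g₁ fc) U₁ t p.1 p.2 ∧ p.2 t = (x.1, x.2.2)},
          ⨅ p₂ : {p : (ℝ → Euc m₂) × (ℝ → Euc n₂ × Euc nc) //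
              IsAdmissiblePair (sysR f₂ g₂ fc) U₂ t p.1 p.2 ∧ p.2 t = (x.2.1, x.2.2)},
          (trajCost γ t ℓ₁ (p₁ : (ℝ → Euc m₁) × (ℝ → Euc n₁ × Euc nc)).2
            ⊔ trajCost γ t ℓ₂ (p₂ : (ℝ → Euc m₂) × (ℝ → Euc n₂ × Euc nc)).2) :=
          le_iInf fun p₁ => le_iInf fun p₂ =>
            key _ _ p₁.2.1 p₁.2.2 _ _ p₂.2.1 p₂.2.2
      _ = ⨅ p₁ : {p : (ℝ → Euc m₁) × (ℝ → Euc n₁ × Euc nc) //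
              IsAdmissiblePair (sysR f₁ g₁ fc) U₁ t p.1 p.2 ∧ p.2 t = (x.1, x.2.2)},
          (trajCost γ t ℓ₁ (p₁ : (ℝ → Euc m₁) × (ℝ → Euc n₁ × Euc nc)).2
            ⊔ tvCLVF (sysR f₂ g₂ fc) U₂ γ ℓ₂ (x.2.1, x.2.2) t) :=
          iInf_congr fun p₁ => (sup_iInf_eq _ _).symm
      _ = _ := by
          rw [← iInf_sup_eq]
          rfl
  · -- max V₁ V₂ ≤ V
    refine le_iInf ?_
    rintro ⟨⟨u, ξ⟩, hadm, hstart⟩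
    have proj : ∀ {n m : ℕ} (f : Euc n × Euc nc → Euc n)
        (g : Euc n × Euc nc → (Euc m →L[ℝ] Euc n)) (ℓ' : Euc n × Euc nc → ℝ)
        (L : (Euc n₁ × Euc n₂ × Euc nc) →L[ℝ] (Euc n × Euc nc)) (U : Set (Euc m))
        (P : Euc m₁ × Euc m₂ → Euc m), Measurable P → (∀ v ∈ U₁ ×ˢ U₂, P v ∈ U) →
        (∀ (y : Euc n₁ × Euc n₂ × Euc nc) (v : Euc m₁ × Euc m₂), v ∈ U₁ ×ˢ U₂ →
          L (fullR f₁ g₁ f₂ g₂ fc y v) = sysR f g fc (L y) (P v)) →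
        (∀ s, ℓ' (L (ξ s)) ≤ ℓ (ξ s)) →
        tvCLVF (sysR f g fc) U γ ℓ' (L x) t ≤ trajCost γ t ℓ ξ := by
      intro n m f g ℓ' L U P hPm hPU hcomm hle
      have h1 : IsAdmissiblePair (sysR f g fc) U t (fun s => P (u s))
          (fun s => L (ξ s)) := hadm.projCLM L hPm hPU hcomm
      refine le_trans (iInf_le _ ⟨((fun s => P (u s)), fun s => L (ξ s)), h1,
        by show L (ξ t) = L x; rw [show ξ t = x from hstart]⟩) ?_
      refine iSup₂_mono fun s _ => ?_
      exact ENNReal.ofReal_le_ofReal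
        (mul_le_mul_of_nonneg_left (hle s) (Real.exp_nonneg _))
    refine max_le ?_ ?_
    · have := proj f₁ g₁ ℓ₁
        ((ContinuousLinearMap.fst ℝ (Euc n₁) (Euc n₂ × Euc nc)).prod
          ((ContinuousLinearMap.snd ℝ (Euc n₂) (Euc nc)).comp
            (ContinuousLinearMap.snd ℝ (Euc n₁) (Euc n₂ × Euc nc))))
        U₁ Prod.fst measurable_fst (fun v hv => hv.1) (fun y v _ => rfl)
        (fun s => le_max_left _ _)
      exact this
    · have := proj f₂ g₂ ℓ₂
        (((ContinuousLinearMap.fst ℝ (Euc n₂) (Euc nc)).comp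
            (ContinuousLinearMap.snd ℝ (Euc n₁) (Euc n₂ × Euc nc))).prod
          ((ContinuousLinearMap.snd ℝ (Euc n₂) (Euc nc)).comp
            (ContinuousLinearMap.snd ℝ (Euc n₁) (Euc n₂ × Euc nc))))
        U₂ Prod.snd measurable_snd (fun v hv => hv.2) (fun y v _ => rfl)
        (fun s => le_max_right _ _)
      exact this

end Aux

/-- Exact reconstruction of the TV-CLVF for self-contained subsystems without shared
controls (Lemma 1): the full value function is the pointwise maximum of the subsystem
value functions, and the same holds for the infinite-horizon limits. -/
theorem tvCLVF_exact_reconstruction {n₁ n₂ nc m₁ m₂ : ℕ}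
    (f₁ : Euc n₁ × Euc nc → Euc n₁) (g₁ : Euc n₁ × Euc nc → (Euc m₁ →L[ℝ] Euc n₁))
    (f₂ : Euc n₂ × Euc nc → Euc n₂) (g₂ : Euc n₂ × Euc nc → (Euc m₂ →L[ℝ] Euc n₂))
    (fc : Euc nc → Euc nc) (hfc : ∃ K, LipschitzWith K fc)
    (U₁ : Set (Euc m₁)) (U₂ : Set (Euc m₂)) (hU₁ : U₁.Nonempty) (hU₂ : U₂.Nonempty)
    (γ : ℝ) (hγ : 0 < γ)
    (ℓ₁ : Euc n₁ × Euc nc → ℝ) (ℓ₂ : Euc n₂ × Euc nc → ℝ)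
    (hℓ₁ : Continuous ℓ₁) (hℓ₂ : Continuous ℓ₂)
    (hℓ₁0 : ∀ z, 0 ≤ ℓ₁ z) (hℓ₂0 : ∀ z, 0 ≤ ℓ₂ z)
    -- each subsystem admits at least one admissible pair from every initial condition:
    (hexist₁ : ∀ t ≤ (0 : ℝ), ∀ z : Euc n₁ × Euc nc, ∃ u ξ,
      IsAdmissiblePair (fun z v₁ => ((f₁ z + g₁ z v₁, fc z.2) : Euc n₁ × Euc nc))
        U₁ t u ξ ∧ ξ t = z)
    (hexist₂ : ∀ t ≤ (0 : ℝ), ∀ z : Euc n₂ × Euc nc, ∃ u ξ,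
      IsAdmissiblePair (fun z v₂ => ((f₂ z + g₂ z v₂, fc z.2) : Euc n₂ × Euc nc))
        U₂ t u ξ ∧ ξ t = z) :
    -- finite-horizon exact reconstruction:
    (∀ t ≤ (0 : ℝ), ∀ x : Euc n₁ × Euc n₂ × Euc nc,
      tvCLVF
        (fun x v => ((f₁ (x.1, x.2.2) + g₁ (x.1, x.2.2) v.1,
          f₂ (x.2.1, x.2.2) + g₂ (x.2.1, x.2.2) v.2, fc x.2.2) : Euc n₁ × Euc n₂ × Euc nc))
        (U₁ ×ˢ U₂) γ
        (fun x => max (ℓ₁ (x.1, x.2.2)) (ℓ₂ (x.2.1, x.2.2))) x t =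
      max
        (tvCLVF (fun z v₁ => ((f₁ z + g₁ z v₁, fc z.2) : Euc n₁ × Euc nc))
          U₁ γ ℓ₁ (x.1, x.2.2) t)
        (tvCLVF (fun z v₂ => ((f₂ z + g₂ z v₂, fc z.2) : Euc n₂ × Euc nc))
          U₂ γ ℓ₂ (x.2.1, x.2.2) t)) ∧
    -- infinite-horizon limits:
    (∀ (x : Euc n₁ × Euc n₂ × Euc nc) (Vinf V₁inf V₂inf : ℝ≥0∞),
      Tendsto (fun t =>
        tvCLVF
          (fun x v => ((f₁ (x.1, x.2.2) + g₁ (x.1, x.2.2) v.1,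
            f₂ (x.2.1, x.2.2) + g₂ (x.2.1, x.2.2) v.2, fc x.2.2) :
              Euc n₁ × Euc n₂ × Euc nc))
          (U₁ ×ˢ U₂) γ
          (fun x => max (ℓ₁ (x.1, x.2.2)) (ℓ₂ (x.2.1, x.2.2))) x t) atBot (𝓝 Vinf) →
      Tendsto (fun t =>
        tvCLVF (fun z v₁ => ((f₁ z + g₁ z v₁, fc z.2) : Euc n₁ × Euc nc))
          U₁ γ ℓ₁ (x.1, x.2.2) t) atBot (𝓝 V₁inf) →
      Tendsto (fun t =>
        tvCLVF (fun z v₂ => ((f₂ z + g₂ z v₂, fc z.2) : Euc n₂ × Euc nc))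
          U₂ γ ℓ₂ (x.2.1, x.2.2) t) atBot (𝓝 V₂inf) →
      Vinf = max V₁inf V₂inf) := by
  have hmain := fun (t : ℝ) (ht : t ≤ 0) (x : Euc n₁ × Euc n₂ × Euc nc) =>
    recon_main f₁ g₁ f₂ g₂ fc hfc U₁ U₂ γ ℓ₁ ℓ₂ t ht x
  refine ⟨hmain, ?_⟩
  intro x Vinf V₁inf V₂inf hf h1 h2
  have heq : (fun t => tvCLVF
      (fun x v => ((f₁ (x.1, x.2.2) + g₁ (x.1, x.2.2) v.1,
        f₂ (x.2.1, x.2.2) + g₂ (x.2.1, x.2.2) v.2, fc x.2.2) :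
          Euc n₁ × Euc n₂ × Euc nc))
      (U₁ ×ˢ U₂) γ (fun x => max (ℓ₁ (x.1, x.2.2)) (ℓ₂ (x.2.1, x.2.2))) x t)
      =ᶠ[atBot]
      (fun t => max
        (tvCLVF (fun z v₁ => ((f₁ z + g₁ z v₁, fc z.2) : Euc n₁ × Euc nc))
          U₁ γ ℓ₁ (x.1, x.2.2) t)
        (tvCLVF (fun z v₂ => ((f₂ z + g₂ z v₂, fc z.2) : Euc n₂ × Euc nc))
          U₂ γ ℓ₂ (x.2.1, x.2.2) t)) :=
    eventually_atBot.2 ⟨0, fun t ht => hmain t ht x⟩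
  have hmax : Tendsto (fun t => max
      (tvCLVF (fun z v₁ => ((f₁ z + g₁ z v₁, fc z.2) : Euc n₁ × Euc nc))
        U₁ γ ℓ₁ (x.1, x.2.2) t)
      (tvCLVF (fun z v₂ => ((f₂ z + g₂ z v₂, fc z.2) : Euc n₂ × Euc nc))
        U₂ γ ℓ₂ (x.2.1, x.2.2) t)) atBot (𝓝 Vinf) := hf.congr' heq
  exact tendsto_nhds_unique hmax (h1.max h2)
end
end

section
/- Consider the decomposed system with state x = (x₁, x₂, x_c) ∈ ℝ^{n₁} × ℝ^{n₂} × ℝ^{n_c}, controls u = (u₁, u₂, u_c) valued in nonempty sets U₁, U₂, U_c, and dynamics ẋ₁ = F₁((x₁, x_c), (u₁, u_c)), ẋ₂ = F₂((x₂, x_c), (u₂, u_c)), ẋ_c = F_c(x_c, u_c). Let S be a set of full states. Suppose for every x = (x₁, x₂, x_c) ∈ S and every t ≤ 0 there exist admissible pairs (v₁*, ζ₁*) and (v₂*, ζ₂*) for the two subsystems starting at (x₁, x_c) and (x₂, x_c) that attain the infima defining V₁((x₁, x_c), t) and V₂((x₂, x_c), t), whose shared-control components agree almost everywhere on [t, 0]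 and whose shared-state trajectory components agree on [t, 0]. Then for every x ∈ S and every t ≤ 0, V(x, t) = max(V₁((x₁, x_c), t), V₂((x₂, x_c), t)). -/
open MeasureTheory Set Filter
open scoped ENNReal Topology

noncomputable section

section Aux

variable {E F : Type*} [NormedAddCommGroup E] [NormedSpace ℝ E]
  [NormedAddCommGroup F] [NormedSpace ℝ F] {f : ℝ → E × F} {a b : ℝ}

lemma II_fst (h : IntervalIntegrable f volume a b) :
    IntervalIntegrable (fun x => (f x).1) volume a b := by
  rw [intervalIntegrable_iff] at h ⊢
  exact (ContinuousLinearMap.fst ℝ E F).integrable_comp h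

lemma II_snd (h : IntervalIntegrable f volume a b) :
    IntervalIntegrable (fun x => (f x).2) volume a b := by
  rw [intervalIntegrable_iff] at h ⊢
  exact (ContinuousLinearMap.snd ℝ E F).integrable_comp h

lemma II_prod {g₁ : ℝ → E} {g₂ : ℝ → F} (h₁ : IntervalIntegrable g₁ volume a b)
    (h₂ : IntervalIntegrable g₂ volume a b) :
    IntervalIntegrable (fun x => ((g₁ x, g₂ x) : E × F)) volume a b := by
  rw [intervalIntegrable_iff] at h₁ h₂ ⊢
  exact MeasureTheory.Integrable.prodMk h₁ h₂

lemma intInt_fst [CompleteSpace E] [CompleteSpace F]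
    (h : IntervalIntegrable f volume a b) :
    (∫ x in a..b, f x).1 = ∫ x in a..b, (f x).1 := by
  simpa using ((ContinuousLinearMap.fst ℝ E F).intervalIntegral_comp_comm h).symm

lemma intInt_snd [CompleteSpace E] [CompleteSpace F]
    (h : IntervalIntegrable f volume a b) :
    (∫ x in a..b, f x).2 = ∫ x in a..b, (f x).2 := by
  simpa using ((ContinuousLinearMap.snd ℝ E F).intervalIntegral_comp_comm h).symm

lemma biSup_max {ι : Type*} {p : ι → Prop} (f g : ι → ℝ≥0∞) :
    ⨆ (s) (_ : p s), max (f s) (g s)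
      = max (⨆ (s) (_ : p s), f s) (⨆ (s) (_ : p s), g s) := by
  apply le_antisymm
  · exact iSup₂_le fun s hs => max_le_max (le_iSup₂ (f := fun s _ => f s) s hs)
      (le_iSup₂ (f := fun s _ => g s) s hs)
  · exact max_le (iSup₂_mono fun s hs => le_max_left _ _)
      (iSup₂_mono fun s hs => le_max_right _ _)

lemma intervalIntegral_prod [CompleteSpace E] [CompleteSpace F] {g₁ : ℝ → E} {g₂ : ℝ → F}
    (h₁ : IntervalIntegrable g₁ volume a b) (h₂ : IntervalIntegrable g₂ volume a b) :
    ∫ x in a..b, ((g₁ x, g₂ x) : E × F)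
      = (∫ x in a..b, g₁ x, ∫ x in a..b, g₂ x) := by
  refine Prod.ext ?_ ?_
  · have h := (ContinuousLinearMap.fst ℝ E F).intervalIntegral_comp_comm (II_prod h₁ h₂)
    simpa using h.symm
  · have h := (ContinuousLinearMap.snd ℝ E F).intervalIntegral_comp_comm (II_prod h₁ h₂)
    simpa using h.symm

lemma trajCost_mono {E E' : Type*} (γ t : ℝ) {ℓ : E → ℝ} {ℓ' : E' → ℝ}
    {ξ : ℝ → E} {ξ' : ℝ → E'} (h : ∀ s ∈ Icc t (0 : ℝ), ℓ (ξ s) ≤ ℓ' (ξ' s)) :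
    trajCost γ t ℓ ξ ≤ trajCost γ t ℓ' ξ' := by
  unfold trajCost
  exact iSup₂_mono fun s hs => ENNReal.ofReal_le_ofReal
    (mul_le_mul_of_nonneg_left (h s hs) (Real.exp_nonneg _))

lemma ofReal_exp_max (e a b : ℝ) (he : 0 ≤ e) :
    ENNReal.ofReal (e * max a b)
      = max (ENNReal.ofReal (e * a)) (ENNReal.ofReal (e * b)) := by
  rw [mul_max_of_nonneg _ _ he]
  exact Monotone.map_max (fun _ _ h => ENNReal.ofReal_le_ofReal h)

end Aux

set_option maxHeartbeats 16000000 in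
/-- Exact reconstruction of the TV-CLVF with shared controls (Theorem 1): if on the set
`S` the two subsystems admit optimal admissible pairs whose shared-control components
agree almost everywhere and whose shared-state components agree, then the full value
function equals the maximum of the subsystem value functions on `S`. -/
theorem tvCLVF_exact_reconstruction_shared {n₁ n₂ nc m₁ m₂ mc : ℕ}
    (F₁ : Euc n₁ × Euc nc → Euc m₁ × Euc mc → Euc n₁)
    (F₂ : Euc n₂ × Euc nc → Euc m₂ × Euc mc → Euc n₂)
    (Fc : Euc nc × Euc mc → Euc nc)
    (U₁ : Set (Euc m₁)) (U₂ : Set (Euc m₂)) (Uc : Set (Euc mc))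
    (hU₁ : U₁.Nonempty) (hU₂ : U₂.Nonempty) (hUc : Uc.Nonempty)
    (γ : ℝ) (hγ : 0 < γ)
    (ℓ₁ : Euc n₁ × Euc nc → ℝ) (ℓ₂ : Euc n₂ × Euc nc → ℝ)
    (hℓ₁ : Continuous ℓ₁) (hℓ₂ : Continuous ℓ₂)
    (hℓ₁0 : ∀ z, 0 ≤ ℓ₁ z) (hℓ₂0 : ∀ z, 0 ≤ ℓ₂ z)
    (S : Set (Euc n₁ × Euc n₂ × Euc nc))
    -- on `S`, there are optimal subsystem admissible pairs with compatible shared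
    -- controls (a.e.) and identical shared-state trajectories:
    (hopt : ∀ x ∈ S, ∀ t ≤ (0 : ℝ),
      ∃ (v₁ : ℝ → Euc m₁ × Euc mc) (ζ₁ : ℝ → Euc n₁ × Euc nc)
        (v₂ : ℝ → Euc m₂ × Euc mc) (ζ₂ : ℝ → Euc n₂ × Euc nc),
        IsAdmissiblePair (fun z v => ((F₁ z v, Fc (z.2, v.2)) : Euc n₁ × Euc nc))
          (U₁ ×ˢ Uc) t v₁ ζ₁ ∧
        ζ₁ t = ((x.1, x.2.2) : Euc n₁ × Euc nc) ∧
        trajCost γ t ℓ₁ ζ₁ =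
          tvCLVF (fun z v => ((F₁ z v, Fc (z.2, v.2)) : Euc n₁ × Euc nc))
            (U₁ ×ˢ Uc) γ ℓ₁ (x.1, x.2.2) t ∧
        IsAdmissiblePair (fun z v => ((F₂ z v, Fc (z.2, v.2)) : Euc n₂ × Euc nc))
          (U₂ ×ˢ Uc) t v₂ ζ₂ ∧
        ζ₂ t = ((x.2.1, x.2.2) : Euc n₂ × Euc nc) ∧
        trajCost γ t ℓ₂ ζ₂ =
          tvCLVF (fun z v => ((F₂ z v, Fc (z.2, v.2)) : Euc n₂ × Euc nc))
            (U₂ ×ˢ Uc) γ ℓ₂ (x.2.1, x.2.2) t ∧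
        (∀ᵐ s ∂(volume.restrict (Icc t (0 : ℝ))), (v₁ s).2 = (v₂ s).2) ∧
        (∀ s ∈ Icc t (0 : ℝ), (ζ₁ s).2 = (ζ₂ s).2)) :
    ∀ x ∈ S, ∀ t ≤ (0 : ℝ),
      tvCLVF
        (fun x u => ((F₁ (x.1, x.2.2) (u.1, u.2.2), F₂ (x.2.1, x.2.2) (u.2.1, u.2.2),
          Fc (x.2.2, u.2.2)) : Euc n₁ × Euc n₂ × Euc nc))
        (U₁ ×ˢ (U₂ ×ˢ Uc)) γ
        (fun x => max (ℓ₁ (x.1, x.2.2)) (ℓ₂ (x.2.1, x.2.2))) x t =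
      max
        (tvCLVF (fun z v => ((F₁ z v, Fc (z.2, v.2)) : Euc n₁ × Euc nc))
          (U₁ ×ˢ Uc) γ ℓ₁ (x.1, x.2.2) t)
        (tvCLVF (fun z v => ((F₂ z v, Fc (z.2, v.2)) : Euc n₂ × Euc nc))
          (U₂ ×ˢ Uc) γ ℓ₂ (x.2.1, x.2.2) t) := by
  intro x hx t ht
  obtain ⟨v₁, ζ₁, v₂, ζ₂, ⟨hv₁m, hv₁U, hζ₁c, hdyn₁⟩, hζ₁t, hcost₁,
    ⟨hv₂m, hv₂U, hζ₂c, hdyn₂⟩, hζ₂t, hcost₂, hvshared, hζshared⟩ := hopt x hx t ht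
  have hv' : ∀ᵐ τ ∂(volume : Measure ℝ), τ ∈ Icc t 0 → (v₁ τ).2 = (v₂ τ).2 :=
    (ae_restrict_iff' measurableSet_Icc).mp hvshared
  apply le_antisymm
  · -- upper bound: build a full admissible pair from the two subsystem pairs
    have hadm : IsAdmissiblePair
        (fun x u => ((F₁ (x.1, x.2.2) (u.1, u.2.2), F₂ (x.2.1, x.2.2) (u.2.1, u.2.2),
          Fc (x.2.2, u.2.2)) : Euc n₁ × Euc n₂ × Euc nc))
        (U₁ ×ˢ (U₂ ×ˢ Uc)) t (fun s => ((v₁ s).1, (v₂ s).1, (v₂ s).2))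
        (fun s => ((ζ₁ s).1, (ζ₂ s).1, (ζ₂ s).2)) := by
      refine ⟨hv₁m.fst.prodMk (hv₂m.fst.prodMk hv₂m.snd),
        fun s => ⟨(hv₁U s).1, (hv₂U s).1, (hv₂U s).2⟩,
        (hζ₁c.fst).prodMk ((hζ₂c.fst).prodMk hζ₂c.snd), ?_⟩
      intro s hs
      have hsub : uIoc t s ⊆ Icc t 0 := by
        rw [uIoc_of_le hs.1]
        exact fun τ hτ => ⟨le_of_lt hτ.1, hτ.2.trans hs.2⟩
      have hi₁ : IntervalIntegrable
          (fun τ => ((F₁ (ζ₁ τ) (v₁ τ), Fc ((ζ₁ τ).2, (v₁ τ).2)) : Euc n₁ × Euc nc))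
          volume t s := (hdyn₁ s hs).1
      have hi₂ : IntervalIntegrable
          (fun τ => ((F₂ (ζ₂ τ) (v₂ τ), Fc ((ζ₂ τ).2, (v₂ τ).2)) : Euc n₂ × Euc nc))
          volume t s := (hdyn₂ s hs).1
      have hig : IntervalIntegrable
          (fun τ => ((F₁ (ζ₁ τ) (v₁ τ),
            F₂ (ζ₂ τ) (v₂ τ), Fc ((ζ₂ τ).2, (v₂ τ).2)) : Euc n₁ × Euc n₂ × Euc nc))
          volume t s := II_prod (II_fst hi₁) hi₂
      have haeI : ∀ᵐ τ ∂(volume : Measure ℝ), τ ∈ uIoc t s →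
          ((F₁ ((ζ₁ τ).1, (ζ₂ τ).2) ((v₁ τ).1, (v₂ τ).2),
            F₂ (ζ₂ τ) (v₂ τ), Fc ((ζ₂ τ).2, (v₂ τ).2)) : Euc n₁ × Euc n₂ × Euc nc)
          = (F₁ (ζ₁ τ) (v₁ τ), F₂ (ζ₂ τ) (v₂ τ), Fc ((ζ₂ τ).2, (v₂ τ).2)) := by
        filter_upwards [hv'] with τ hτv hτ
        rw [← hζshared τ (hsub hτ), ← hτv (hsub hτ)]
      have hii : IntervalIntegrable
          (fun τ => ((F₁ ((ζ₁ τ).1, (ζ₂ τ).2) ((v₁ τ).1, (v₂ τ).2),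
            F₂ (ζ₂ τ) (v₂ τ), Fc ((ζ₂ τ).2, (v₂ τ).2)) : Euc n₁ × Euc n₂ × Euc nc))
          volume t s :=
        hig.congr_ae ((ae_restrict_iff' measurableSet_uIoc).mpr
          (haeI.mono fun τ h hm => (h hm).symm))
      have hint : (∫ τ in t..s, ((F₁ ((ζ₁ τ).1, (ζ₂ τ).2) ((v₁ τ).1, (v₂ τ).2),
            F₂ (ζ₂ τ) (v₂ τ), Fc ((ζ₂ τ).2, (v₂ τ).2)) : Euc n₁ × Euc n₂ × Euc nc))
          = ∫ τ in t..s, ((F₁ (ζ₁ τ) (v₁ τ), F₂ (ζ₂ τ) (v₂ τ),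
            Fc ((ζ₂ τ).2, (v₂ τ).2)) : Euc n₁ × Euc n₂ × Euc nc) :=
        intervalIntegral.integral_congr_ae haeI
      refine ⟨hii, ?_⟩
      have e₁ : ζ₁ s = ζ₁ t
          + ∫ τ in t..s, ((F₁ (ζ₁ τ) (v₁ τ), Fc ((ζ₁ τ).2, (v₁ τ).2)) :
            Euc n₁ × Euc nc) := (hdyn₁ s hs).2
      have e₂ : ζ₂ s = ζ₂ t
          + ∫ τ in t..s, ((F₂ (ζ₂ τ) (v₂ τ), Fc ((ζ₂ τ).2, (v₂ τ).2)) :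
            Euc n₂ × Euc nc) := (hdyn₂ s hs).2
      rw [intervalIntegral_prod (II_fst hi₁) (II_snd hi₁)] at e₁
      rw [intervalIntegral_prod (II_fst hi₂) (II_snd hi₂)] at e₂
      show ((ζ₁ s).1, (ζ₂ s).1, (ζ₂ s).2)
          = ((ζ₁ t).1, (ζ₂ t).1, (ζ₂ t).2)
            + ∫ τ in t..s, ((F₁ ((ζ₁ τ).1, (ζ₂ τ).2) ((v₁ τ).1, (v₂ τ).2),
              F₂ (ζ₂ τ) (v₂ τ), Fc ((ζ₂ τ).2, (v₂ τ).2)) : Euc n₁ × Euc n₂ × Euc nc)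
      rw [hint, intervalIntegral_prod (II_fst hi₁) hi₂,
        intervalIntegral_prod (II_fst hi₂) (II_snd hi₂), Prod.mk_add_mk, Prod.mk_add_mk,
        Prod.mk.injEq, Prod.mk.injEq]
      exact ⟨congrArg Prod.fst e₁, congrArg Prod.fst e₂, congrArg Prod.snd e₂⟩
    have hξt : (fun s => (((ζ₁ s).1, (ζ₂ s).1, (ζ₂ s).2) : Euc n₁ × Euc n₂ × Euc nc)) t
        = x := by
      have h1 := congrArg Prod.fst hζ₁t
      have h2 := congrArg Prod.fst hζ₂t
      have h3 := congrArg Prod.snd hζ₂t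
      show (((ζ₁ t).1, (ζ₂ t).1, (ζ₂ t).2) : Euc n₁ × Euc n₂ × Euc nc) = (x.1, x.2.1, x.2.2)
      rw [Prod.mk.injEq, Prod.mk.injEq]
      exact ⟨h1, h2, h3⟩
    have hcmax : trajCost γ t (fun x => max (ℓ₁ (x.1, x.2.2)) (ℓ₂ (x.2.1, x.2.2)))
        (fun s => (((ζ₁ s).1, (ζ₂ s).1, (ζ₂ s).2) : Euc n₁ × Euc n₂ × Euc nc))
        = max (trajCost γ t ℓ₁ ζ₁) (trajCost γ t ℓ₂ ζ₂) := by
      unfold trajCost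
      rw [← biSup_max]
      refine biSup_congr fun s hs => ?_
      have h₁ : (((ζ₁ s).1, (ζ₂ s).2) : Euc n₁ × Euc nc) = ζ₁ s :=
        Prod.ext rfl (hζshared s hs).symm
      show ENNReal.ofReal (Real.exp (γ * (s - t))
          * max (ℓ₁ ((ζ₁ s).1, (ζ₂ s).2)) (ℓ₂ (ζ₂ s))) = _
      rw [h₁, ofReal_exp_max _ _ _ (Real.exp_nonneg _)]
    have hle : tvCLVF
        (fun x u => ((F₁ (x.1, x.2.2) (u.1, u.2.2), F₂ (x.2.1, x.2.2) (u.2.1, u.2.2),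
          Fc (x.2.2, u.2.2)) : Euc n₁ × Euc n₂ × Euc nc))
        (U₁ ×ˢ (U₂ ×ˢ Uc)) γ
        (fun x => max (ℓ₁ (x.1, x.2.2)) (ℓ₂ (x.2.1, x.2.2))) x t
        ≤ trajCost γ t (fun x => max (ℓ₁ (x.1, x.2.2)) (ℓ₂ (x.2.1, x.2.2)))
            (fun s => (((ζ₁ s).1, (ζ₂ s).1, (ζ₂ s).2) : Euc n₁ × Euc n₂ × Euc nc)) :=
      by unfold tvCLVF; exact iInf_le_of_le ⟨(fun s => ((v₁ s).1, (v₂ s).1, (v₂ s).2),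
        fun s => ((ζ₁ s).1, (ζ₂ s).1, (ζ₂ s).2)), hadm, hξt⟩ le_rfl
    rw [hcmax, hcost₁, hcost₂] at hle
    exact hle
  · -- lower bound: project any full admissible pair onto the subsystems
    refine le_iInf fun p => ?_
    obtain ⟨⟨u, ξ⟩, ⟨hum, huU, hξc, hdyn⟩, hξt⟩ := p
    have key : ∀ s ∈ Icc t (0 : ℝ),
        (IntervalIntegrable (fun τ => ((F₁ ((ξ τ).1, (ξ τ).2.2) ((u τ).1, (u τ).2.2),
          Fc ((ξ τ).2.2, (u τ).2.2)) : Euc n₁ × Euc nc)) volume t s ∧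
        (((ξ s).1, (ξ s).2.2) : Euc n₁ × Euc nc) = ((ξ t).1, (ξ t).2.2)
          + ∫ τ in t..s, ((F₁ ((ξ τ).1, (ξ τ).2.2) ((u τ).1, (u τ).2.2),
            Fc ((ξ τ).2.2, (u τ).2.2)) : Euc n₁ × Euc nc)) ∧
        (IntervalIntegrable (fun τ => ((F₂ ((ξ τ).2.1, (ξ τ).2.2) ((u τ).2.1, (u τ).2.2),
          Fc ((ξ τ).2.2, (u τ).2.2)) : Euc n₂ × Euc nc)) volume t s ∧
        (((ξ s).2.1, (ξ s).2.2) : Euc n₂ × Euc nc) = ((ξ t).2.1, (ξ t).2.2)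
          + ∫ τ in t..s, ((F₂ ((ξ τ).2.1, (ξ τ).2.2) ((u τ).2.1, (u τ).2.2),
            Fc ((ξ τ).2.2, (u τ).2.2)) : Euc n₂ × Euc nc)) := by
      intro s hs
      have hi : IntervalIntegrable
          (fun τ => ((F₁ ((ξ τ).1, (ξ τ).2.2) ((u τ).1, (u τ).2.2),
            F₂ ((ξ τ).2.1, (ξ τ).2.2) ((u τ).2.1, (u τ).2.2),
            Fc ((ξ τ).2.2, (u τ).2.2)) : Euc n₁ × Euc n₂ × Euc nc))
          volume t s := (hdyn s hs).1
      have hiA : IntervalIntegrable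
          (fun τ => F₁ ((ξ τ).1, (ξ τ).2.2) ((u τ).1, (u τ).2.2)) volume t s :=
        II_fst hi
      have hiB : IntervalIntegrable
          (fun τ => F₂ ((ξ τ).2.1, (ξ τ).2.2) ((u τ).2.1, (u τ).2.2)) volume t s :=
        II_fst (II_snd hi)
      have hiC : IntervalIntegrable
          (fun τ => Fc ((ξ τ).2.2, (u τ).2.2)) volume t s := II_snd (II_snd hi)
      have e : ξ s = ξ t
          + ∫ τ in t..s, ((F₁ ((ξ τ).1, (ξ τ).2.2) ((u τ).1, (u τ).2.2),
            F₂ ((ξ τ).2.1, (ξ τ).2.2) ((u τ).2.1, (u τ).2.2),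
            Fc ((ξ τ).2.2, (u τ).2.2)) : Euc n₁ × Euc n₂ × Euc nc) := (hdyn s hs).2
      rw [intervalIntegral_prod (II_fst hi) (II_snd hi),
        intervalIntegral_prod (II_fst (II_snd hi)) (II_snd (II_snd hi))] at e
      have c1 := congrArg Prod.fst e
      have c2 := congrArg Prod.fst (congrArg Prod.snd e)
      have c3 := congrArg Prod.snd (congrArg Prod.snd e)
      refine ⟨⟨II_prod hiA hiC, ?_⟩, II_prod hiB hiC, ?_⟩
      · rw [intervalIntegral_prod hiA hiC, Prod.mk_add_mk, Prod.mk.injEq]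
        exact ⟨c1, c3⟩
      · rw [intervalIntegral_prod hiB hiC, Prod.mk_add_mk, Prod.mk.injEq]
        exact ⟨c2, c3⟩
    have hadm₁ : IsAdmissiblePair
        (fun z v => ((F₁ z v, Fc (z.2, v.2)) : Euc n₁ × Euc nc)) (U₁ ×ˢ Uc) t
        (fun s => ((u s).1, (u s).2.2)) (fun s => ((ξ s).1, (ξ s).2.2)) :=
      ⟨hum.fst.prodMk hum.snd.snd, fun s => ⟨(huU s).1, (huU s).2.2⟩,
        hξc.fst.prodMk hξc.snd.snd, fun s hs => (key s hs).1⟩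
    have hadm₂ : IsAdmissiblePair
        (fun z v => ((F₂ z v, Fc (z.2, v.2)) : Euc n₂ × Euc nc)) (U₂ ×ˢ Uc) t
        (fun s => ((u s).2.1, (u s).2.2)) (fun s => ((ξ s).2.1, (ξ s).2.2)) :=
      ⟨hum.snd.fst.prodMk hum.snd.snd, fun s => ⟨(huU s).2.1, (huU s).2.2⟩,
        hξc.snd.fst.prodMk hξc.snd.snd, fun s hs => (key s hs).2⟩
    have hin₁ : (fun s => (((ξ s).1, (ξ s).2.2) : Euc n₁ × Euc nc)) t = (x.1, x.2.2) := by
      show (((ξ t).1, (ξ t).2.2) : Euc n₁ × Euc nc) = (x.1, x.2.2)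
      rw [show ξ t = x from hξt]
    have hin₂ : (fun s => (((ξ s).2.1, (ξ s).2.2) : Euc n₂ × Euc nc)) t
        = (x.2.1, x.2.2) := by
      show (((ξ t).2.1, (ξ t).2.2) : Euc n₂ × Euc nc) = (x.2.1, x.2.2)
      rw [show ξ t = x from hξt]
    have hb₁ : trajCost γ t ℓ₁ (fun s => (((ξ s).1, (ξ s).2.2) : Euc n₁ × Euc nc))
        ≤ trajCost γ t (fun x => max (ℓ₁ (x.1, x.2.2)) (ℓ₂ (x.2.1, x.2.2))) ξ :=
      trajCost_mono γ t fun s hs => le_max_left _ _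
    have hb₂ : trajCost γ t ℓ₂ (fun s => (((ξ s).2.1, (ξ s).2.2) : Euc n₂ × Euc nc))
        ≤ trajCost γ t (fun x => max (ℓ₁ (x.1, x.2.2)) (ℓ₂ (x.2.1, x.2.2))) ξ :=
      trajCost_mono γ t fun s hs => le_max_right _ _
    have hV₁ : tvCLVF (fun z v => ((F₁ z v, Fc (z.2, v.2)) : Euc n₁ × Euc nc))
        (U₁ ×ˢ Uc) γ ℓ₁ (x.1, x.2.2) t
        ≤ trajCost γ t ℓ₁ (fun s => (((ξ s).1, (ξ s).2.2) : Euc n₁ × Euc nc)) :=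
      by unfold tvCLVF; exact iInf_le_of_le ⟨(fun s => ((u s).1, (u s).2.2),
        fun s => ((ξ s).1, (ξ s).2.2)), hadm₁, hin₁⟩ le_rfl
    have hV₂ : tvCLVF (fun z v => ((F₂ z v, Fc (z.2, v.2)) : Euc n₂ × Euc nc))
        (U₂ ×ˢ Uc) γ ℓ₂ (x.2.1, x.2.2) t
        ≤ trajCost γ t ℓ₂ (fun s => (((ξ s).2.1, (ξ s).2.2) : Euc n₂ × Euc nc)) :=
      by unfold tvCLVF; exact iInf_le_of_le ⟨(fun s => ((u s).2.1, (u s).2.2),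
        fun s => ((ξ s).2.1, (ξ s).2.2)), hadm₂, hin₂⟩ le_rfl
    exact max_le (hV₁.trans hb₁) (hV₂.trans hb₂)
end
end

section
/- Consider the control-affine system ẋ = f(x) + g(x)u with state x = (x₁, x₂, x_c) ∈ ℝ^{n₁} × ℝ^{n₂} × ℝ^{n_c}, control u = (u₁, u₂, u_c) ∈ U₁ × U₂ × U_c, and suppose the dynamics decompose so that for every x and u, the (x₁, x_c)-components of f(x) + g(x)u equal f₁(z₁) + g₁(z₁)v₁ and the (x₂, x_c)-components equal f₂(z₂) + g₂(z₂)v₂, where z₁ = (x₁, x_c), z₂ = (x₂, x_c), v₁ = (u₁, u_c), v₂ = (u₂, u_c). Let γ > 0, let V₁, V₂ be real-valued functions on the subsystem state spaces, differentiable on a set S̄ of relevant subsystem states, and define W(x) = V₁(z₁) + V₂(z₂) and the admissible control sets ACS_i(z_i) = {v_i ∈ U_i × U_c : DV_i(z_i)(f_i(z_i) + g_i(z_i)v_i) ≤ −γ V_i(z_i)}. If for every x ∈ S̄ there exist v₁ ∈ ACS₁(z₁) and v₂ ∈ ACS₂(z₂) whose shared-control components u_c coincide, then for every x ∈ S̄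 there exists u ∈ U₁ × U₂ × U_c such that DW(x)(f(x) + g(x)u) ≤ −γ W(x). -/
noncomputable section

set_option maxHeartbeats 1000000 in
/-- Feasibility of the decrease condition for the reconstructed function (QP feasibility):
if for every state in `S̄` the shared-control components of the two subsystems'
admissible control sets intersect, then the reconstructed function `W = V₁ ∘ π₁ + V₂ ∘ π₂`
admits, at every state of `S̄`, a joint control realizing the decrease condition. -/
theorem reconstruction_decrease_feasible {n₁ n₂ nc m₁ m₂ mc : ℕ} (γ : ℝ) (hγ : 0 < γ)
    (f : Euc n₁ × Euc n₂ × Euc nc → Euc n₁ × Euc n₂ × Euc nc)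
    (g : Euc n₁ × Euc n₂ × Euc nc →
      ((Euc m₁ × Euc m₂ × Euc mc) →L[ℝ] (Euc n₁ × Euc n₂ × Euc nc)))
    (f₁ : Euc n₁ × Euc nc → Euc n₁ × Euc nc)
    (g₁ : Euc n₁ × Euc nc → ((Euc m₁ × Euc mc) →L[ℝ] (Euc n₁ × Euc nc)))
    (f₂ : Euc n₂ × Euc nc → Euc n₂ × Euc nc)
    (g₂ : Euc n₂ × Euc nc → ((Euc m₂ × Euc mc) →L[ℝ] (Euc n₂ × Euc nc)))
    (U₁ : Set (Euc m₁)) (U₂ : Set (Euc m₂)) (Uc : Set (Euc mc))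
    -- the dynamics decompose into the two self-contained subsystems:
    (hdecomp₁ : ∀ (x : Euc n₁ × Euc n₂ × Euc nc) (u : Euc m₁ × Euc m₂ × Euc mc),
      (((f x + g x u).1, (f x + g x u).2.2) : Euc n₁ × Euc nc) =
        f₁ (x.1, x.2.2) + g₁ (x.1, x.2.2) (u.1, u.2.2))
    (hdecomp₂ : ∀ (x : Euc n₁ × Euc n₂ × Euc nc) (u : Euc m₁ × Euc m₂ × Euc mc),
      (((f x + g x u).2.1, (f x + g x u).2.2) : Euc n₂ × Euc nc) =
        f₂ (x.2.1, x.2.2) + g₂ (x.2.1, x.2.2) (u.2.1, u.2.2))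
    (Sbar : Set (Euc n₁ × Euc n₂ × Euc nc))
    -- differentiability of the subsystem value functions at the projected states:
    (V₁ : Euc n₁ × Euc nc → ℝ) (V₂ : Euc n₂ × Euc nc → ℝ)
    (hdiff₁ : ∀ x ∈ Sbar, DifferentiableAt ℝ V₁ ((x.1, x.2.2) : Euc n₁ × Euc nc))
    (hdiff₂ : ∀ x ∈ Sbar, DifferentiableAt ℝ V₂ ((x.2.1, x.2.2) : Euc n₂ × Euc nc))
    -- the shared-control components of the admissible control sets intersect on S̄:
    (hACS : ∀ x ∈ Sbar,
      ∃ v₁ ∈ U₁ ×ˢ Uc, ∃ v₂ ∈ U₂ ×ˢ Uc,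
        fderiv ℝ V₁ ((x.1, x.2.2) : Euc n₁ × Euc nc)
            (f₁ (x.1, x.2.2) + g₁ (x.1, x.2.2) v₁) ≤ -γ * V₁ (x.1, x.2.2) ∧
        fderiv ℝ V₂ ((x.2.1, x.2.2) : Euc n₂ × Euc nc)
            (f₂ (x.2.1, x.2.2) + g₂ (x.2.1, x.2.2) v₂) ≤ -γ * V₂ (x.2.1, x.2.2) ∧
        v₁.2 = v₂.2) :
    ∀ x ∈ Sbar, ∃ u ∈ U₁ ×ˢ (U₂ ×ˢ Uc),
      fderiv ℝ (fun y : Euc n₁ × Euc n₂ × Euc nc =>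
          V₁ (y.1, y.2.2) + V₂ (y.2.1, y.2.2)) x (f x + g x u) ≤
        -γ * (V₁ (x.1, x.2.2) + V₂ (x.2.1, x.2.2)) := by

  intro x hx
  obtain ⟨v₁, hv₁U, v₂, hv₂U, h1, h2, hc⟩ := hACS x hx
  refine ⟨(v₁.1, v₂.1, v₁.2), ⟨hv₁U.1, hv₂U.1, hv₁U.2⟩, ?_⟩
  set L₁ : (Euc n₁ × Euc n₂ × Euc nc) →L[ℝ] (Euc n₁ × Euc nc) :=
    (ContinuousLinearMap.fst ℝ (Euc n₁) (Euc n₂ × Euc nc)).prod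
      ((ContinuousLinearMap.snd ℝ (Euc n₂) (Euc nc)).comp
        (ContinuousLinearMap.snd ℝ (Euc n₁) (Euc n₂ × Euc nc))) with hL₁
  set L₂ : (Euc n₁ × Euc n₂ × Euc nc) →L[ℝ] (Euc n₂ × Euc nc) :=
    ((ContinuousLinearMap.fst ℝ (Euc n₂) (Euc nc)).prod
      (ContinuousLinearMap.snd ℝ (Euc n₂) (Euc nc))).comp
        (ContinuousLinearMap.snd ℝ (Euc n₁) (Euc n₂ × Euc nc)) with hL₂
  have hd1 : HasFDerivAt (fun y : Euc n₁ × Euc n₂ × Euc nc => V₁ (y.1, y.2.2))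
      ((fderiv ℝ V₁ (x.1, x.2.2)).comp L₁) x := by
    have := ((hdiff₁ x hx).hasFDerivAt).comp x (L₁.hasFDerivAt (x := x))
    exact this
  have hd2 : HasFDerivAt (fun y : Euc n₁ × Euc n₂ × Euc nc => V₂ (y.2.1, y.2.2))
      ((fderiv ℝ V₂ (x.2.1, x.2.2)).comp L₂) x := by
    have := ((hdiff₂ x hx).hasFDerivAt).comp x (L₂.hasFDerivAt (x := x))
    exact this
  have hW := (hd1.add hd2).fderiv
  rw [show (fun y : Euc n₁ × Euc n₂ × Euc nc => V₁ (y.1, y.2.2) + V₂ (y.2.1, y.2.2)) =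
      ((fun y : Euc n₁ × Euc n₂ × Euc nc => V₁ (y.1, y.2.2)) + fun y => V₂ (y.2.1, y.2.2)) from rfl, hW]
  have e1 : L₁ (f x + g x (v₁.1, v₂.1, v₁.2)) = f₁ (x.1, x.2.2) + g₁ (x.1, x.2.2) v₁ := by
    have := hdecomp₁ x (v₁.1, v₂.1, v₁.2)
    simpa [hL₁] using this
  have e2 : L₂ (f x + g x (v₁.1, v₂.1, v₁.2)) = f₂ (x.2.1, x.2.2) + g₂ (x.2.1, x.2.2) v₂ := by
    have := hdecomp₂ x (v₁.1, v₂.1, v₁.2)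
    simpa [hL₂, hc, Prod.add_def] using this
  have : (((fderiv ℝ V₁ (x.1, x.2.2)).comp L₁) + ((fderiv ℝ V₂ (x.2.1, x.2.2)).comp L₂))
      (f x + g x (v₁.1, v₂.1, v₁.2)) =
      fderiv ℝ V₁ (x.1, x.2.2) (f₁ (x.1, x.2.2) + g₁ (x.1, x.2.2) v₁) +
      fderiv ℝ V₂ (x.2.1, x.2.2) (f₂ (x.2.1, x.2.2) + g₂ (x.2.1, x.2.2) v₂) := by
    simp [ContinuousLinearMap.add_apply, e1, e2]
  rw [this]
  nlinarith [h1, h2]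
end
end
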